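/- arXiv:1109.5544 — 4 statements merged into one kernel-verified Lean document; each statement's English description precedes it below -/
import Mathlib

section
/- Every automorphism of the crossing graph of the diagonals of a convex m-gon (m ≥ 5), i.e., every bijection of the set of diagonals preserving the crossing relation in both directions, preserves the length of each diagonal, where the length of a diagonal is the minimum of the lengths of the two boundary paths connecting its endpoints. -/
/-- `x` lies strictly between `a` and `b` in the cyclic order on `ZMod m`. -/
def Pbetween (m : ℕ) (a x b : ZMod m) : Prop :=
  0 < (x - a).val ∧ (x - a).val < (b - a).val

/-- `d` is a diagonal of the convex `m`-gon with vertices `ZMod m`: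
an unordered pair of distinct, non-adjacent vertices. -/
def PIsDiag (m : ℕ) (d : Finset (ZMod m)) : Prop :=
  ∃ a b : ZMod m, d = {a, b} ∧ a ≠ b ∧ a - b ≠ 1 ∧ b - a ≠ 1

/-- Two diagonals cross: their endpoint pairs separate each other cyclically,
i.e. exactly one endpoint of the second lies strictly between the endpoints of the first. -/
def PCross (m : ℕ) (d e : Finset (ZMod m)) : Prop :=
  ∃ a b c d' : ZMod m, d = {a, b} ∧ e = {c, d'} ∧
    a ≠ b ∧ a ≠ c ∧ a ≠ d' ∧ b ≠ c ∧ b ≠ d' ∧ c ≠ d' ∧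
    Xor' (Pbetween m a c b) (Pbetween m a d' b)

/-! A diagonal `{a, b}` with `k = (b - a).val` is crossed exactly by the pairs `{a + i, a + j}`
with `0 < i < k < j < m`, each of which is itself a diagonal, so it crosses
`(k - 1) * (m - k - 1)` diagonals. A crossing-preserving bijection preserves this number, and
`(k - 1) * (m - k - 1) - (l - 1) * (m - l - 1) = (k - l) * (m - k - l)`, so the image diagonal
has `l = k` or `l = m - k`; either way `min k (m - k)` is unchanged. -/

theorem Finset.pair_eq_pair_iff {α : Type*} [DecidableEq α] {a b c d : α} :
    ({a, b} : Finset α) = {c, d} ↔ a = c ∧ b = d ∨ a = d ∧ b = c := by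
  rw [← Finset.coe_inj, Finset.coe_pair, Finset.coe_pair, Set.pair_eq_pair_iff]

namespace ZMod

theorem val_add_natCast_sub {m : ℕ} (a : ZMod m) {i : ℕ} (hi : i < m) : (a + i - a).val = i := by
  rw [add_sub_cancel_left, val_cast_of_lt hi]

theorem ne_of_val_sub_ne {m : ℕ} {a x y : ZMod m} (h : (x - a).val ≠ (y - a).val) : x ≠ y := by
  rintro rfl; exact h rfl

theorem add_natCast_inj {m : ℕ} (a : ZMod m) {i j : ℕ} (hi : i < m) (hj : j < m) :
    a + (i : ZMod m) = a + j ↔ i = j := by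
  rw [add_right_inj, natCast_eq_natCast_iff', Nat.mod_eq_of_lt hi, Nat.mod_eq_of_lt hj]

variable {m : ℕ} [NeZero m]

theorem two_le_val_iff {x : ZMod m} : 2 ≤ x.val ↔ x ≠ 0 ∧ x ≠ 1 := by
  refine ⟨fun h => ⟨?_, ?_⟩, fun ⟨h0, h1⟩ => ?_⟩
  · rintro rfl; simp at h
  · rintro rfl; have := Nat.mod_le 1 m; rw [val_one_eq_one_mod] at h; omega
  · have hv0 : x.val ≠ 0 := (val_ne_zero x).2 h0
    have hv1 : x.val ≠ 1 := fun hv => h1 (by rw [← natCast_zmod_val x, hv, Nat.cast_one])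
    omega

theorem val_sub_add_val_sub {a b : ZMod m} (hab : a ≠ b) : (a - b).val + (b - a).val = m := by
  have hba : b - a ≠ 0 := sub_ne_zero.2 hab.symm
  have := (b - a).val_lt
  rw [← neg_sub, neg_val, if_neg hba]
  omega

theorem add_val_sub (a x : ZMod m) : a + ((x - a).val : ZMod m) = x := by
  rw [natCast_zmod_val, add_sub_cancel]

end ZMod

section Polygon

variable {m : ℕ} [NeZero m]

theorem pIsDiag_pair_iff {a b : ZMod m} :
    PIsDiag m {a, b} ↔ 2 ≤ (b - a).val ∧ 2 ≤ (a - b).val := by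
  simp only [ZMod.two_le_val_iff, sub_ne_zero]
  constructor
  · rintro ⟨u, v, huv, h0, h1, h2⟩
    rcases Finset.pair_eq_pair_iff.1 huv with ⟨rfl, rfl⟩ | ⟨rfl, rfl⟩
    · exact ⟨⟨h0.symm, h2⟩, h0, h1⟩
    · exact ⟨⟨h0, h1⟩, h0.symm, h2⟩
  · rintro ⟨⟨h0, h2⟩, -, h1⟩
    exact ⟨a, b, rfl, h0.symm, h1, h2⟩

theorem pbetween_swap {a b x : ZMod m} (hab : a ≠ b) (hxa : x ≠ a) (hxb : x ≠ b) :
    Pbetween m b x a ↔ ¬ Pbetween m a x b := by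
  have hba := ZMod.val_sub_add_val_sub hab
  have hxb' := (ZMod.val_ne_zero _).2 (sub_ne_zero.2 hxb)
  have hxa' := (ZMod.val_ne_zero _).2 (sub_ne_zero.2 hxa)
  have hlt := (x - b).val_lt
  have hsplit : x - a = (x - b) + (b - a) := by ring
  unfold Pbetween
  rcases lt_or_ge ((x - b).val + (b - a).val) m with h | h
  · rw [hsplit, ZMod.val_add_of_lt h]; omega
  · have := ZMod.val_add_val_of_le h; rw [← hsplit] at this; omega

theorem exists_offsets_of_pbetween {a b c d : ZMod m} (hc : Pbetween m a c b)
    (hd : ¬ Pbetween m a d b) (hda : d ≠ a) (hdb : d ≠ b) :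
    ∃ i j : ℕ, 0 < i ∧ i < (b - a).val ∧ (b - a).val < j ∧ j < m ∧
      ({c, d} : Finset (ZMod m)) = {a + i, a + j} := by
  refine ⟨(c - a).val, (d - a).val, hc.1, hc.2, ?_, (d - a).val_lt, by
    rw [ZMod.add_val_sub, ZMod.add_val_sub]⟩
  have hj0 := (ZMod.val_ne_zero _).2 (sub_ne_zero.2 hda)
  have hjk : (d - a).val ≠ (b - a).val := fun h => hdb (sub_left_inj.1 (ZMod.val_injective m h))
  unfold Pbetween at hd
  omega

theorem pCross_pair_iff {a b : ZMod m} (hab : a ≠ b) (e : Finset (ZMod m)) :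
    PCross m {a, b} e ↔ ∃ i j : ℕ, 0 < i ∧ i < (b - a).val ∧ (b - a).val < j ∧ j < m ∧
      e = {a + i, a + j} := by
  constructor
  · rintro ⟨a₀, b₀, c, d, hp, rfl, -, h1, h2, h3, h4, -, hx⟩
    obtain ⟨hca, hcb, hda, hdb, hx⟩ : c ≠ a ∧ c ≠ b ∧ d ≠ a ∧ d ≠ b ∧
        Xor (Pbetween m a c b) (Pbetween m a d b) := by
      rcases Finset.pair_eq_pair_iff.1 hp with ⟨rfl, rfl⟩ | ⟨rfl, rfl⟩
      · exact ⟨h1.symm, h3.symm, h2.symm, h4.symm, hx⟩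
      · rw [pbetween_swap hab h3.symm h1.symm, pbetween_swap hab h4.symm h2.symm] at hx
        exact ⟨h3.symm, h1.symm, h4.symm, h2.symm, xor_not_not.1 hx⟩
    rcases hx with ⟨hc, hd⟩ | ⟨hd, hc⟩
    · exact exists_offsets_of_pbetween hc hd hda hdb
    · rw [Finset.pair_comm]
      exact exists_offsets_of_pbetween hd hc hca hcb
  · rintro ⟨i, j, hi, hik, hkj, hj, rfl⟩
    have hi' := ZMod.val_add_natCast_sub a (hik.trans (b - a).val_lt)
    have hj' := ZMod.val_add_natCast_sub a hj
    refine ⟨a, b, a + i, a + j, rfl, rfl, hab, ?_, ?_, ?_, ?_, ?_, Or.inl ⟨?_, ?_⟩⟩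
    all_goals first
      | apply ZMod.ne_of_val_sub_ne (a := a); simp only [sub_self, ZMod.val_zero, hi', hj']; omega
      | unfold Pbetween; simp only [hi', hj']; omega

theorem pIsDiag_of_pCross {a b : ZMod m} (hab : a ≠ b) {e : Finset (ZMod m)}
    (h : PCross m {a, b} e) : PIsDiag m e := by
  obtain ⟨i, j, hi, hik, hkj, hj, rfl⟩ := (pCross_pair_iff hab e).1 h
  have hsub : a + (j : ZMod m) - (a + i) = ((j - i : ℕ) : ZMod m) := by
    rw [Nat.cast_sub (by omega)]; ring
  have hval : (a + (j : ZMod m) - (a + i)).val = j - i := by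
    rw [hsub, ZMod.val_cast_of_lt (by omega)]
  have hne : a + (i : ZMod m) ≠ a + j := by
    rw [Ne, ZMod.add_natCast_inj a (by omega) hj]; omega
  have := ZMod.val_sub_add_val_sub hne
  rw [pIsDiag_pair_iff]
  omega

theorem card_pCross_pair {a b : ZMod m} (hab : a ≠ b) :
    Nat.card {e : Finset (ZMod m) // PCross m {a, b} e} =
      ((b - a).val - 1) * (m - (b - a).val - 1) := by
  set k := (b - a).val with hk
  have himage : {e | PCross m {a, b} e} = (fun p : ℕ × ℕ => ({a + p.1, a + p.2} : Finset _)) ''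
      ↑(Finset.Ioo 0 k ×ˢ Finset.Ioo k m) := by
    ext e
    simp [pCross_pair_iff hab, ← hk, and_assoc, eq_comm]
  have hinj : Set.InjOn (fun p : ℕ × ℕ => ({a + p.1, a + p.2} : Finset (ZMod m)))
      ↑(Finset.Ioo 0 k ×ˢ Finset.Ioo k m) := by
    rintro ⟨i, j⟩ hij ⟨i', j'⟩ hij' h
    simp only [Finset.coe_product, Finset.coe_Ioo, Set.mem_prod, Set.mem_Ioo] at hij hij'
    have := (b - a).val_lt
    rcases Finset.pair_eq_pair_iff.1 h with
      ⟨h1 : a + (i : ZMod m) = a + i', h2 : a + (j : ZMod m) = a + j'⟩ |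
      ⟨h1 : a + (i : ZMod m) = a + j', -⟩
    · rw [ZMod.add_natCast_inj a (by omega) (by omega)] at h1 h2
      rw [h1, h2]
    · rw [ZMod.add_natCast_inj a (by omega) (by omega)] at h1
      omega
  change Nat.card ↥{e | PCross m {a, b} e} = _
  rw [himage, Nat.card_image_of_injOn hinj, Nat.card_coe_set_eq, Set.ncard_coe_finset,
    Finset.card_product, Nat.card_Ioo, Nat.card_Ioo, Nat.sub_zero]

theorem card_crossing_diagonals {a b : ZMod m} (hab : a ≠ b) :
    Nat.card {e : {d : Finset (ZMod m) // PIsDiag m d} // PCross m {a, b} e.1} =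
      ((b - a).val - 1) * (m - (b - a).val - 1) :=
  (Nat.card_congr (Equiv.subtypeSubtypeEquivSubtype (pIsDiag_of_pCross hab))).trans
    (card_pCross_pair hab)

end Polygon

theorem eq_or_add_eq_of_pred_mul_eq {m k l : ℕ} (hk : 1 ≤ k) (hkm : k + 1 ≤ m) (hl : 1 ≤ l)
    (hlm : l + 1 ≤ m) (h : (k - 1) * (m - k - 1) = (l - 1) * (m - l - 1)) :
    k = l ∨ k + l = m := by
  rw [Nat.sub_sub, Nat.sub_sub] at h
  zify [hk, hl, hkm, hlm] at h
  have hfactor : ((k : ℤ) - l) * (k + l - m) = 0 := by linear_combination -h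
  rcases mul_eq_zero.1 hfactor with h | h <;> omega

/-- Every crossing-preserving bijection of the diagonals of a convex `m`-gon (`m ≥ 5`)
preserves the length of each diagonal. -/
theorem stmt_0 (m : ℕ) (hm : 5 ≤ m)
    (f : {d : Finset (ZMod m) // PIsDiag m d} ≃ {d : Finset (ZMod m) // PIsDiag m d})
    (hf : ∀ d e, PCross m d.1 e.1 ↔ PCross m (f d).1 (f e).1) :
    ∀ (d : {d : Finset (ZMod m) // PIsDiag m d}) (a b a' b' : ZMod m),
      d.1 = {a, b} → (f d).1 = {a', b'} →
      min (a - b).val (b - a).val = min (a' - b').val (b' - a').val := by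
  have : NeZero m := ⟨by omega⟩
  intro d a b a' b' hd hfd
  have hdiag : PIsDiag m {a, b} := hd ▸ d.2
  have hdiag' : PIsDiag m {a', b'} := hfd ▸ (f d).2
  rw [pIsDiag_pair_iff] at hdiag hdiag'
  have hab : a ≠ b := by rintro rfl; simp at hdiag
  have hab' : a' ≠ b' := by rintro rfl; simp at hdiag'
  have hcount : Nat.card {e : {d : Finset (ZMod m) // PIsDiag m d} // PCross m d.1 e.1} =
      Nat.card {e : {d : Finset (ZMod m) // PIsDiag m d} // PCross m (f d).1 e.1} :=
    Nat.card_congr (f.subtypeEquiv (hf d))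
  rw [hd, hfd, card_crossing_diagonals hab, card_crossing_diagonals hab'] at hcount
  have hsum := ZMod.val_sub_add_val_sub hab
  have hsum' := ZMod.val_sub_add_val_sub hab'
  rcases eq_or_add_eq_of_pred_mul_eq (by omega) (by omega) (by omega) (by omega) hcount with h | h
    <;> omega
end

section
/- For a convex m-gon with m ≥ 5, two diagonals share a common endpoint if and only if there exists a diagonal of length 2 crossing both of them. -/
namespace ZMod

variable {m : ℕ}

lemma eq_add_of_val_sub_eq [NeZero m] {a b : ZMod m} {k : ℕ} (h : (b - a).val = k) :
    b = a + k := by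
  rw [← h, natCast_zmod_val, add_sub_cancel]

lemma natCast_ne_zero_of_lt {k : ℕ} (hk0 : k ≠ 0) (hk : k < m) : (k : ZMod m) ≠ 0 := by
  rw [ne_eq, natCast_eq_zero_iff]
  exact Nat.not_dvd_of_pos_of_lt (Nat.pos_of_ne_zero hk0) hk

lemma val_neg_two_of_two_lt (hm : 2 < m) : (-2 : ZMod m).val = m - 2 := by
  have : NeZero m := ⟨by omega⟩
  have h2 : (2 : ZMod m).val = 2 := val_ofNat_of_lt hm
  rw [neg_val, if_neg (by rw [← val_eq_zero, h2]; omega), h2]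

lemma val_neg_one_of_one_lt (hm : 1 < m) : (-1 : ZMod m).val = m - 1 := by
  have : NeZero m := ⟨by omega⟩
  have h1 : (1 : ZMod m).val = 1 := val_one'' (by omega)
  rw [neg_val, if_neg (by rw [← val_eq_zero, h1]; omega), h1]

end ZMod

section Polygon

variable {m : ℕ}

lemma PIsDiag.exists_eq_pair_of_mem {d : Finset (ZMod m)} (hd : PIsDiag m d) {v : ZMod m}
    (hv : v ∈ d) : ∃ u, d = {v, u} ∧ u ≠ v ∧ u ≠ v + 1 ∧ u ≠ v - 1 := by
  obtain ⟨x, y, rfl, hxy, hxy1, hyx1⟩ := hd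
  rw [Finset.mem_insert, Finset.mem_singleton] at hv
  rcases hv with rfl | rfl
  · exact ⟨y, rfl, hxy.symm, fun h => hyx1 (by rw [h]; ring), fun h => hxy1 (by rw [h]; ring)⟩
  · exact ⟨x, Finset.pair_comm _ _, hxy, fun h => hxy1 (by rw [h]; ring),
      fun h => hyx1 (by rw [h]; ring)⟩

lemma pbetween_self_add_two_iff (hm : 2 < m) (a x : ZMod m) :
    Pbetween m a x (a + 2) ↔ x = a + 1 := by
  have : NeZero m := ⟨by omega⟩
  have h1 : (1 : ZMod m).val = 1 := ZMod.val_one'' (by omega)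
  have h2 : (2 : ZMod m).val = 2 := ZMod.val_ofNat_of_lt hm
  rw [Pbetween, add_sub_cancel_left, h2]
  constructor
  · rintro ⟨hpos, hlt⟩
    simpa using ZMod.eq_add_of_val_sub_eq (show (x - a).val = 1 by omega)
  · rintro rfl
    rw [add_sub_cancel_left, h1]
    omega

lemma pbetween_add_two_self_iff (hm : 2 < m) (a x : ZMod m) :
    Pbetween m (a + 2) x a ↔ x ≠ a ∧ x ≠ a + 1 ∧ x ≠ a + 2 := by
  have : NeZero m := ⟨by omega⟩
  have hval : ∀ c : ZMod m, x - (a + 2) = c ↔ (x - (a + 2)).val = c.val :=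
    fun c => (ZMod.val_injective m).eq_iff.symm
  have ha : x = a ↔ (x - (a + 2)).val = m - 2 := by
    rw [← ZMod.val_neg_two_of_two_lt hm, ← hval]
    constructor <;> intro h <;> linear_combination h
  have ha1 : x = a + 1 ↔ (x - (a + 2)).val = m - 1 := by
    rw [← ZMod.val_neg_one_of_one_lt (by omega), ← hval]
    constructor <;> intro h <;> linear_combination h
  have ha2 : x = a + 2 ↔ (x - (a + 2)).val = 0 := by
    rw [ZMod.val_eq_zero, sub_eq_zero]
  have hlt := ZMod.val_lt (x - (a + 2))
  rw [Pbetween, show a - (a + 2) = -2 by ring, ZMod.val_neg_two_of_two_lt hm, ne_eq, ne_eq, ne_eq,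
    ha, ha1, ha2]
  omega

lemma pcross_pair_add_two_iff (hm : 2 < m) {d : Finset (ZMod m)} (hd : PIsDiag m d) (a : ZMod m) :
    PCross m {a, a + 2} d ↔ a + 1 ∈ d := by
  have h1 : (1 : ZMod m) ≠ 0 := by exact_mod_cast ZMod.natCast_ne_zero_of_lt one_ne_zero (by omega)
  have h2 : (2 : ZMod m) ≠ 0 := by exact_mod_cast ZMod.natCast_ne_zero_of_lt two_ne_zero hm
  constructor
  · rintro ⟨b, c, x, y, hg, rfl, -, hbx, hby, hcx, hcy, -, hx⟩
    have hg' := congrArg (fun s : Finset (ZMod m) => (s : Set (ZMod m))) hg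
    simp only [Finset.coe_pair, Set.pair_eq_pair_iff] at hg'
    simp only [Finset.mem_insert, Finset.mem_singleton]
    rcases hg' with ⟨rfl, rfl⟩ | ⟨rfl, rfl⟩
    · rw [pbetween_self_add_two_iff hm, pbetween_self_add_two_iff hm] at hx
      rcases hx with ⟨h, -⟩ | ⟨h, -⟩ <;> simp [h]
    · rw [pbetween_add_two_self_iff hm, pbetween_add_two_self_iff hm] at hx
      rcases hx with ⟨-, h⟩ | ⟨-, h⟩ <;> grind
  · intro hv
    obtain ⟨u, rfl, hu, hu1, hu2⟩ := hd.exists_eq_pair_of_mem hv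
    refine ⟨a, a + 2, a + 1, u, rfl, rfl, fun h => h2 (by linear_combination -h),
      fun h => h1 (by linear_combination -h), fun h => hu2 (by linear_combination -h),
      fun h => h1 (by linear_combination h), fun h => hu1 (by linear_combination -h), hu.symm,
      Or.inl ⟨(pbetween_self_add_two_iff hm a _).2 rfl,
        fun h => hu ((pbetween_self_add_two_iff hm a u).1 h)⟩⟩

lemma pisDiag_pair_add_two (hm : 3 < m) (a : ZMod m) : PIsDiag m {a, a + 2} := by
  have h1 : (1 : ZMod m) ≠ 0 := by exact_mod_cast ZMod.natCast_ne_zero_of_lt one_ne_zero (by omega)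
  have h2 : (2 : ZMod m) ≠ 0 := by exact_mod_cast ZMod.natCast_ne_zero_of_lt two_ne_zero (by omega)
  have h3 : (3 : ZMod m) ≠ 0 := by exact_mod_cast ZMod.natCast_ne_zero_of_lt three_ne_zero hm
  exact ⟨a, a + 2, rfl, fun h => h2 (by linear_combination -h),
    fun h => h3 (by linear_combination -h), fun h => h1 (by linear_combination h)⟩

lemma min_val_sub_add_two (hm : 3 < m) (a : ZMod m) :
    min (a - (a + 2)).val (a + 2 - a).val = 2 := by
  have h2 : (2 : ZMod m).val = 2 := ZMod.val_ofNat_of_lt (by omega : 2 < m)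
  rw [show a - (a + 2) = -2 by ring, add_sub_cancel_left, ZMod.val_neg_two_of_two_lt (by omega),
    h2]
  omega

lemma exists_pair_eq_pair_add_two [NeZero m] {a b : ZMod m}
    (h : min (a - b).val (b - a).val = 2) : ∃ c, ({a, b} : Finset (ZMod m)) = {c, c + 2} := by
  rcases min_choice (a - b).val (b - a).val with hab | hab <;> rw [hab] at h
  · refine ⟨b, ?_⟩
    rw [ZMod.eq_add_of_val_sub_eq h, Nat.cast_ofNat, Finset.pair_comm]
  · exact ⟨a, by rw [ZMod.eq_add_of_val_sub_eq h, Nat.cast_ofNat]⟩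

end Polygon

/-- Two diagonals of a convex `m`-gon (`m ≥ 5`) share a common endpoint iff
there exists a diagonal of length 2 crossing both of them. -/
theorem stmt_1 (m : ℕ) (hm : 5 ≤ m) (d e : Finset (ZMod m))
    (hd : PIsDiag m d) (he : PIsDiag m e) :
    (d ∩ e).Nonempty ↔
      ∃ g : Finset (ZMod m), PIsDiag m g ∧
        (∃ a b : ZMod m, g = {a, b} ∧ min (a - b).val (b - a).val = 2) ∧
        PCross m g d ∧ PCross m g e := by
  have : NeZero m := ⟨by omega⟩
  constructor
  · rintro ⟨v, hv⟩
    obtain ⟨hvd, hve⟩ := Finset.mem_inter.1 hv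
    refine ⟨{v - 1, v - 1 + 2}, pisDiag_pair_add_two (by omega) _,
      ⟨_, _, rfl, min_val_sub_add_two (by omega) _⟩, ?_, ?_⟩
    · rwa [pcross_pair_add_two_iff (by omega) hd, sub_add_cancel]
    · rwa [pcross_pair_add_two_iff (by omega) he, sub_add_cancel]
  · rintro ⟨g, -, ⟨a, b, rfl, hab⟩, hgd, hge⟩
    obtain ⟨c, hc⟩ := exists_pair_eq_pair_add_two hab
    rw [hc, pcross_pair_add_two_iff (by omega) hd] at hgd
    rw [hc, pcross_pair_add_two_iff (by omega) he] at hge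
    exact ⟨c + 1, Finset.mem_inter.2 ⟨hgd, hge⟩⟩
end

section
/- Let F be a complete simplicial fan in R^n with generator set A, and suppose ω: A → R_{>0} satisfies: for every pair of adjacent maximal cones C₁, C₂ with linear dependence λ supported on C₁ ∪ C₂ (positive on the generators of C₁\C₂ and C₂\C₁), one has Σ_v λ(v)ω(v) > 0. Then for each maximal cone C, the affine hyperplane through the points {v/ω(v) : v generator of C} strictly separates the origin from the points w/ω(w) for generators w of any adjacent maximal cone not in C; i.e., the unique affine dependence among {0} ∪ {v/ω(v) : v ∈ C₁ ∪ C₂} has the coefficient of the origin of opposite sign to the coefficients of the points of C₁\C₂ and C₂\C₁. -/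
/-!
Write `λ v = μ v / ω v`; then `λ` is a linear dependence among the generators of `C₁ ∪ C₂`,
nontrivial because `(μ, μ₀)` is, and `μ₀ = -∑ λ v ω v`. Since both cones are simplicial, `λ`
cannot vanish on either of the two generators `a ∈ C₁ \ C₂`, `b ∈ C₂ \ C₁`, and since the cones
meet in a common face it takes the same sign on both: otherwise splitting `λ` into positive and
negative parts exhibits a point of `C₁ ∩ C₂` whose coordinate along `a` is nonzero. After
normalising `λ` to be positive on `a` and `b`, the hypothesis on `ω` says `∑ λ v ω v > 0`, i.e.
`μ₀` has the sign opposite to `μ a` and `μ b`.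
-/

open Finset

namespace Finset

variable {α : Type*} [DecidableEq α] {s t : Finset α} {a : α}

lemma mem_and_notMem_of_sdiff_eq_singleton (h : s \ t = {a}) : a ∈ s ∧ a ∉ t :=
  mem_sdiff.1 (h ▸ mem_singleton_self a)

lemma union_eq_insert_of_sdiff_eq_singleton (h : t \ s = {a}) : s ∪ t = insert a s := by
  rw [← union_sdiff_self_eq_union, h, union_singleton]

lemma union_eq_insert_of_sdiff_eq_singleton' (h : s \ t = {a}) : s ∪ t = insert a t := by
  rw [union_comm, union_eq_insert_of_sdiff_eq_singleton h]

lemma inter_eq_erase_of_sdiff_eq_singleton (h : s \ t = {a}) : s ∩ t = s.erase a := by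
  rw [← sdiff_sdiff_self_left, h, sdiff_singleton_eq_erase]

lemma card_sdiff_eq_one_of_card_inter {k : ℕ} (hs : s.card = k) (ht : t.card = k) (hst : s ≠ t)
    (hinter : (s ∩ t).card = k - 1) : (s \ t).card = 1 := by
  have hpos : 0 < (s \ t).card := by
    refine card_pos.2 (nonempty_of_ne_empty fun h => hst ?_)
    exact eq_of_subset_of_card_le (sdiff_eq_empty_iff_subset.1 h) (hs.trans ht.symm).ge
  have := card_inter_add_card_sdiff s t
  omega

end Finset

variable {V : Type*} [AddCommGroup V] [Module ℝ V]

def IsConicalComb (C : Finset V) (x : V) : Prop :=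
  ∃ c : V → ℝ, (∀ v, 0 ≤ c v) ∧ x = ∑ v ∈ C, c v • v

section LinearIndependent

variable {C : Finset V} (hC : LinearIndependent ℝ (fun v : C => (v : V)))
include hC

lemma eq_zero_of_sum_smul_eq_zero {f : V → ℝ} (hf : ∑ v ∈ C, f v • v = 0) :
    ∀ v ∈ C, f v = 0 :=
  (linearIndepOn_finset_iff (v := id)).1 hC f hf

lemma eq_zero_of_sum_insert_smul_eq_zero [DecidableEq V] {b : V} (hb : b ∉ C) {f : V → ℝ}
    (hf : ∑ v ∈ insert b C, f v • v = 0) (hfb : f b = 0) : ∀ v ∈ insert b C, f v = 0 := by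
  rw [sum_insert hb, hfb, zero_smul, zero_add] at hf
  intro v hv
  rcases mem_insert.1 hv with rfl | hv
  · exact hfb
  · exact eq_zero_of_sum_smul_eq_zero hC hf v hv

lemma eq_of_sum_smul_eq_sum_smul {f g : V → ℝ} (h : ∑ v ∈ C, f v • v = ∑ v ∈ C, g v • v) :
    ∀ v ∈ C, f v = g v := fun v hv =>
  sub_eq_zero.1 <| eq_zero_of_sum_smul_eq_zero hC (f := f - g)
    (by simp only [Pi.sub_apply, sub_smul, sum_sub_distrib, h, sub_self]) v hv

lemma eq_zero_of_sum_smul_eq_sum_smul_erase [DecidableEq V] {a : V} (ha : a ∈ C) {f g : V → ℝ}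
    (h : ∑ v ∈ C, f v • v = ∑ v ∈ C.erase a, g v • v) : f a = 0 := by
  have hg : ∑ v ∈ C.erase a, g v • v = ∑ v ∈ C, Function.update g a 0 v • v := by
    rw [← sum_erase C (a := a) (by simp)]
    exact sum_congr rfl fun v hv => by rw [Function.update_of_ne (ne_of_mem_erase hv)]
  simpa using eq_of_sum_smul_eq_sum_smul hC (h.trans hg) a ha

end LinearIndependent

section Adjacent

variable [DecidableEq V] {C₁ C₂ : Finset V} {a b : V}

lemma apply_nonpos_of_apply_nonpos_of_adjacent
    (hind : LinearIndependent ℝ (fun v : C₁ => (v : V)))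
    (hface : ∀ x, IsConicalComb C₁ x → IsConicalComb C₂ x → IsConicalComb (C₁ ∩ C₂) x)
    (ha : C₁ \ C₂ = {a}) (hb : C₂ \ C₁ = {b}) {lam : V → ℝ}
    (hlam : ∑ v ∈ C₁ ∪ C₂, lam v • v = 0) (hlb : lam b ≤ 0) : lam a ≤ 0 := by
  by_contra! hla
  -- `∑ (lam v)⁺ • v` lies in both cones, hence in their common face, which misses `a`
  have hx : ∑ v ∈ C₁, (lam v)⁺ • v = ∑ v ∈ C₂, (lam v)⁻ • v := calc
    _ = ∑ v ∈ C₁ ∪ C₂, (lam v)⁺ • v := by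
      rw [union_eq_insert_of_sdiff_eq_singleton hb,
        sum_insert_zero (by rw [posPart_eq_zero.2 hlb, zero_smul])]
    _ = ∑ v ∈ C₁ ∪ C₂, (lam v)⁻ • v := by
      rw [← sub_eq_zero, ← sum_sub_distrib, ← hlam]
      simp only [← sub_smul, posPart_sub_negPart]
    _ = _ := by
      rw [union_eq_insert_of_sdiff_eq_singleton' ha,
        sum_insert_zero (by rw [negPart_eq_zero.2 hla.le, zero_smul])]
  obtain ⟨c, -, hc⟩ := hface _ ⟨_, fun v => posPart_nonneg _, rfl⟩
    ⟨_, fun v => negPart_nonneg _, hx⟩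
  rw [inter_eq_erase_of_sdiff_eq_singleton ha] at hc
  exact (posPart_pos hla).ne' <| eq_zero_of_sum_smul_eq_sum_smul_erase hind
    (mem_and_notMem_of_sdiff_eq_singleton ha).1 hc

lemma mul_pos_of_sum_smul_eq_zero_of_adjacent
    (hind₁ : LinearIndependent ℝ (fun v : C₁ => (v : V)))
    (hind₂ : LinearIndependent ℝ (fun v : C₂ => (v : V)))
    (hface : ∀ x, IsConicalComb C₁ x → IsConicalComb C₂ x → IsConicalComb (C₁ ∩ C₂) x)
    (ha : C₁ \ C₂ = {a}) (hb : C₂ \ C₁ = {b}) {lam : V → ℝ}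
    (hlam : ∑ v ∈ C₁ ∪ C₂, lam v • v = 0) (hne : ∃ v ∈ C₁ ∪ C₂, lam v ≠ 0) :
    0 < lam a * lam b := by
  obtain ⟨v, hv, hv0⟩ := hne
  have hU₁ := union_eq_insert_of_sdiff_eq_singleton hb
  have hU₂ := union_eq_insert_of_sdiff_eq_singleton' ha
  have hla : lam a ≠ 0 := fun h => hv0 <| eq_zero_of_sum_insert_smul_eq_zero hind₂
    (mem_and_notMem_of_sdiff_eq_singleton ha).2 (hU₂ ▸ hlam) h v (hU₂ ▸ hv)
  have hlb : lam b ≠ 0 := fun h => hv0 <| eq_zero_of_sum_insert_smul_eq_zero hind₁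
    (mem_and_notMem_of_sdiff_eq_singleton hb).2 (hU₁ ▸ hlam) h v (hU₁ ▸ hv)
  rcases hlb.lt_or_gt with hlb' | hlb'
  · exact mul_pos_of_neg_of_neg
      ((apply_nonpos_of_apply_nonpos_of_adjacent hind₁ hface ha hb hlam hlb'.le).lt_of_ne hla)
      hlb'
  · have hneg : ∑ v ∈ C₁ ∪ C₂, (-lam) v • v = 0 := by
      simp only [Pi.neg_apply, neg_smul, sum_neg_distrib, hlam, neg_zero]
    have := apply_nonpos_of_apply_nonpos_of_adjacent hind₁ hface ha hb hneg
      (by simpa using hlb'.le)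
    exact mul_pos ((neg_nonpos.1 this).lt_of_ne' hla) hlb'

lemma mul_pos_of_mem_sdiff_union_sdiff_of_adjacent
    (hind₁ : LinearIndependent ℝ (fun v : C₁ => (v : V)))
    (hind₂ : LinearIndependent ℝ (fun v : C₂ => (v : V)))
    (hface : ∀ x, IsConicalComb C₁ x → IsConicalComb C₂ x → IsConicalComb (C₁ ∩ C₂) x)
    (ha : C₁ \ C₂ = {a}) (hb : C₂ \ C₁ = {b}) {lam : V → ℝ}
    (hlam : ∑ v ∈ C₁ ∪ C₂, lam v • v = 0) (hne : ∃ v ∈ C₁ ∪ C₂, lam v ≠ 0) {v w : V}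
    (hv : v ∈ (C₁ \ C₂) ∪ (C₂ \ C₁)) (hw : w ∈ (C₁ \ C₂) ∪ (C₂ \ C₁)) :
    0 < lam v * lam w := by
  have hab := mul_pos_of_sum_smul_eq_zero_of_adjacent hind₁ hind₂ hface ha hb hlam hne
  simp only [ha, hb, mem_union, mem_singleton] at hv hw
  rcases mul_pos_iff.1 hab with ⟨_, _⟩ | ⟨_, _⟩ <;> rcases hv with rfl | rfl <;>
    rcases hw with rfl | rfl <;> nlinarith

end Adjacent

theorem stmt_13_general (n : ℕ) (A : Finset (Fin n → ℝ)) (M : Finset (Finset (Fin n → ℝ)))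
    (hsub : ∀ C ∈ M, C ⊆ A)
    (hcard : ∀ C ∈ M, C.card = n)
    (hind : ∀ C ∈ M, LinearIndependent ℝ (fun v : C => (v : Fin n → ℝ)))
    (hface : ∀ C₁ ∈ M, ∀ C₂ ∈ M, ∀ x : Fin n → ℝ,
      (∃ c : (Fin n → ℝ) → ℝ, (∀ v, 0 ≤ c v) ∧ x = ∑ v ∈ C₁, c v • v) →
      (∃ c : (Fin n → ℝ) → ℝ, (∀ v, 0 ≤ c v) ∧ x = ∑ v ∈ C₂, c v • v) →
      (∃ c : (Fin n → ℝ) → ℝ, (∀ v, 0 ≤ c v) ∧ x = ∑ v ∈ C₁ ∩ C₂, c v • v))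
    (ω : (Fin n → ℝ) → ℝ) (hω : ∀ v ∈ A, 0 < ω v)
    (hpos : ∀ C₁ ∈ M, ∀ C₂ ∈ M, C₁ ≠ C₂ → (C₁ ∩ C₂).card = n - 1 →
      ∀ lam : (Fin n → ℝ) → ℝ,
        (∀ v, v ∉ C₁ ∪ C₂ → lam v = 0) →
        (∑ v ∈ C₁ ∪ C₂, lam v • v = 0) →
        (∀ v ∈ (C₁ \ C₂) ∪ (C₂ \ C₁), 0 < lam v) →
        0 < ∑ v ∈ C₁ ∪ C₂, lam v * ω v) :
    ∀ C₁ ∈ M, ∀ C₂ ∈ M, C₁ ≠ C₂ → (C₁ ∩ C₂).card = n - 1 →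
      ∀ (μ : (Fin n → ℝ) → ℝ) (μ₀ : ℝ),
        (∀ v, v ∉ C₁ ∪ C₂ → μ v = 0) →
        (∑ v ∈ C₁ ∪ C₂, μ v • (ω v)⁻¹ • v = 0) →
        (μ₀ + ∑ v ∈ C₁ ∪ C₂, μ v = 0) →
        (μ₀ ≠ 0 ∨ ∃ v ∈ C₁ ∪ C₂, μ v ≠ 0) →
        ∀ v ∈ (C₁ \ C₂) ∪ (C₂ \ C₁), μ₀ * μ v < 0 := by
  intro C₁ hC₁ C₂ hC₂ hne hcap μ μ₀ hμ0 hsum haff hnt w hw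
  obtain ⟨a, ha⟩ := card_eq_one.1 <|
    card_sdiff_eq_one_of_card_inter (hcard C₁ hC₁) (hcard C₂ hC₂) hne hcap
  obtain ⟨b, hb⟩ := card_eq_one.1 <| card_sdiff_eq_one_of_card_inter (hcard C₂ hC₂)
    (hcard C₁ hC₁) hne.symm (inter_comm C₁ C₂ ▸ hcap)
  have hωpos : ∀ v ∈ C₁ ∪ C₂, 0 < ω v := fun v hv =>
    hω v (union_subset (hsub C₁ hC₁) (hsub C₂ hC₂) hv)
  set lam : (Fin n → ℝ) → ℝ := fun v => μ v / ω v
  have hμ : ∀ v ∈ C₁ ∪ C₂, μ v = lam v * ω v := fun v hv =>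
    (div_mul_cancel₀ _ (hωpos v hv).ne').symm
  have hlam : ∑ v ∈ C₁ ∪ C₂, lam v • v = 0 := by
    simpa only [lam, div_eq_mul_inv, mul_smul] using hsum
  have hlam_ne : ∃ v ∈ C₁ ∪ C₂, lam v ≠ 0 := by
    obtain ⟨v, hv, hv0⟩ : ∃ v ∈ C₁ ∪ C₂, μ v ≠ 0 := hnt.elim
      (fun h => exists_ne_zero_of_sum_ne_zero fun h0 => h (by linarith)) id
    exact ⟨v, hv, fun h => hv0 (by rw [hμ v hv, h, zero_mul])⟩
  have hS : 0 < lam w * ∑ v ∈ C₁ ∪ C₂, lam v * ω v := by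
    have := hpos C₁ hC₁ C₂ hC₂ hne hcap (fun v => lam w * lam v)
      (fun v hv => by simp [lam, hμ0 v hv])
      (by simp only [mul_smul, ← smul_sum, hlam, smul_zero])
      fun v hv => mul_pos_of_mem_sdiff_union_sdiff_of_adjacent (hind C₁ hC₁) (hind C₂ hC₂)
        (hface C₁ hC₁ C₂ hC₂) ha hb hlam hlam_ne hw hv
    simpa only [mul_assoc, ← mul_sum] using this
  have hμ₀ : μ₀ = -∑ v ∈ C₁ ∪ C₂, lam v * ω v := by
    rw [← sum_congr rfl hμ]
    linarith
  have hwU : w ∈ C₁ ∪ C₂ := union_subset_union sdiff_subset sdiff_subset hw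
  rw [hμ₀, hμ w hwU]
  nlinarith [mul_pos hS (hωpos w hwU)]

/-- Lemma on polytopality of complete simplicial fans: if `ω : A → ℝ_{>0}` is such that for
every pair of adjacent maximal cones the canonical linear dependence `λ` (positive on the two
generators not shared) has `Σ λ(v) ω(v) > 0`, then for every adjacent pair the (unique) affine
dependence among the origin and the points `v/ω(v)` has the coefficient of the origin of
opposite sign to the coefficients of the generators in the symmetric difference. -/
theorem stmt_13 (n : ℕ) (A : Finset (Fin n → ℝ)) (M : Finset (Finset (Fin n → ℝ)))
    (hA0 : (0 : Fin n → ℝ) ∉ A)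
    (hsub : ∀ C ∈ M, C ⊆ A)
    (hcard : ∀ C ∈ M, C.card = n)
    (hind : ∀ C ∈ M, LinearIndependent ℝ (fun v : C => (v : Fin n → ℝ)))
    (hcover : ∀ x : Fin n → ℝ, ∃ C ∈ M, ∃ c : (Fin n → ℝ) → ℝ,
      (∀ v, 0 ≤ c v) ∧ x = ∑ v ∈ C, c v • v)
    (hface : ∀ C₁ ∈ M, ∀ C₂ ∈ M, ∀ x : Fin n → ℝ,
      (∃ c : (Fin n → ℝ) → ℝ, (∀ v, 0 ≤ c v) ∧ x = ∑ v ∈ C₁, c v • v) →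
      (∃ c : (Fin n → ℝ) → ℝ, (∀ v, 0 ≤ c v) ∧ x = ∑ v ∈ C₂, c v • v) →
      (∃ c : (Fin n → ℝ) → ℝ, (∀ v, 0 ≤ c v) ∧ x = ∑ v ∈ C₁ ∩ C₂, c v • v))
    (ω : (Fin n → ℝ) → ℝ) (hω : ∀ v ∈ A, 0 < ω v)
    (hpos : ∀ C₁ ∈ M, ∀ C₂ ∈ M, C₁ ≠ C₂ → (C₁ ∩ C₂).card = n - 1 →
      ∀ lam : (Fin n → ℝ) → ℝ,
        (∀ v, v ∉ C₁ ∪ C₂ → lam v = 0) →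
        (∑ v ∈ C₁ ∪ C₂, lam v • v = 0) →
        (∀ v ∈ (C₁ \ C₂) ∪ (C₂ \ C₁), 0 < lam v) →
        0 < ∑ v ∈ C₁ ∪ C₂, lam v * ω v) :
    ∀ C₁ ∈ M, ∀ C₂ ∈ M, C₁ ≠ C₂ → (C₁ ∩ C₂).card = n - 1 →
      ∀ (μ : (Fin n → ℝ) → ℝ) (μ₀ : ℝ),
        (∀ v, v ∉ C₁ ∪ C₂ → μ v = 0) →
        (∑ v ∈ C₁ ∪ C₂, μ v • (ω v)⁻¹ • v = 0) →
        (μ₀ + ∑ v ∈ C₁ ∪ C₂, μ v = 0) →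
        (μ₀ ≠ 0 ∨ ∃ v ∈ C₁ ∪ C₂, μ v ≠ 0) →
        ∀ v ∈ (C₁ \ C₂) ∪ (C₂ \ C₁), μ₀ * μ v < 0 :=
  stmt_13_general n A M hsub hcard hind hface ω hω hpos
end

section
/- For a triangulation T of a convex polygon whose dual tree is known, the set of normal vectors A(T) = {−αᵢ : i ∈ [n]} ∪ {Σ_{i ∈ p} αᵢ : p a path in the dual tree 𝒯 with edges labeled 1,...,n} determines 𝒯 up to isomorphism; in particular, two trees 𝒯₁, 𝒯₂ with n edges admit a bijection between their edge sets sending edge sets of paths to edge sets of paths if and only if 𝒯₁ and 𝒯₂ are isomorphic as graphs. -/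
/-- `E` is the edge set of some (simple) path in the graph `G`. -/
def IsPathEdgeSet {V : Type*} (G : SimpleGraph V) (E : Set (Sym2 V)) : Prop :=
  ∃ (u v : V) (p : G.Walk u v), p.IsPath ∧ {e | e ∈ p.edges} = E

/-!
Two distinct edges form a path exactly when they share a vertex, so `φ` is an isomorphism of
line graphs, and trees are triangle-free. In a triangle-free graph any edge meeting two edges
at `v` passes through `v`; hence if `v` has degree at least two, `φ` maps the star of `v` onto the
star of the common vertex `d` of the images of two of its edges. If `v` is a leaf with edge `vu`,
the star of `u` goes to the star of some `d`, and the star `{vu}` of `v` to the star of the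
other endpoint of `φ (vu)`. With at least two edges in a connected graph a vertex is determined
by its star, so this gives a bijection of vertices respecting incidence, hence adjacency. Trees
with at most one edge are `K₁` or `K₂`, of sizes determined by the number of edges.
-/

namespace SimpleGraph

variable {V W : Type*} {G : SimpleGraph V}

lemma exists_mem_of_isPathEdgeSet_pair {e f : Sym2 V} (h : IsPathEdgeSet G {e, f})
    (hef : e ≠ f) : ∃ v, v ∈ e ∧ v ∈ f := by
  classical
  obtain ⟨u, w, p, hp, hE⟩ := h
  have hlen : p.length = 2 := by
    rw [← p.length_edges, ← List.toFinset_card_of_nodup hp.isTrail.edges_nodup,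
      ← Finset.card_pair hef]
    congr 1
    rw [← Finset.coe_inj, List.coe_toFinset, hE]
    simp
  have he : e ∈ p.edges := (Set.ext_iff.mp hE e).mpr (by simp)
  have hf : f ∈ p.edges := (Set.ext_iff.mp hE f).mpr (by simp)
  -- `x` is the middle vertex of the path
  rcases p with _ | @⟨_, x, _, _, _ | ⟨_, _ | _⟩⟩ <;> simp at hlen
  simp only [Walk.edges_cons, Walk.edges_nil, List.mem_cons, List.not_mem_nil, or_false] at he hf
  exact ⟨x, by rcases he with rfl | rfl <;> simp, by rcases hf with rfl | rfl <;> simp⟩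

lemma isPathEdgeSet_pair {e f : Sym2 V} (he : e ∈ G.edgeSet) (hf : f ∈ G.edgeSet) (hef : e ≠ f)
    {v : V} (hve : v ∈ e) (hvf : v ∈ f) : IsPathEdgeSet G {e, f} := by
  obtain ⟨a, rfl⟩ : ∃ a, e = s(v, a) := ⟨_, (Sym2.other_spec hve).symm⟩
  obtain ⟨b, rfl⟩ : ∃ b, f = s(v, b) := ⟨_, (Sym2.other_spec hvf).symm⟩
  have ha : G.Adj v a := he
  have hb : G.Adj v b := hf
  have hab : a ≠ b := by rintro rfl; exact hef rfl
  refine ⟨a, b, .cons ha.symm (.cons hb .nil), ?_, ?_⟩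
  · simp [Walk.isPath_def, ha.ne.symm, hab, hb.ne]
  · ext
    simp [Sym2.eq_swap]

lemma isPathEdgeSet_pair_iff {e f : Sym2 V} (he : e ∈ G.edgeSet) (hf : f ∈ G.edgeSet)
    (hef : e ≠ f) : IsPathEdgeSet G {e, f} ↔ ∃ v, v ∈ e ∧ v ∈ f :=
  ⟨(exists_mem_of_isPathEdgeSet_pair · hef),
    fun ⟨_, hve, hvf⟩ ↦ isPathEdgeSet_pair he hf hef hve hvf⟩

variable {G₁ : SimpleGraph V} {G₂ : SimpleGraph W}

def lineGraphIsoOfIsPathEdgeSet (φ : G₁.edgeSet ≃ G₂.edgeSet)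
    (hφ : ∀ E : Set G₁.edgeSet,
      IsPathEdgeSet G₁ (Subtype.val '' E) ↔ IsPathEdgeSet G₂ (Subtype.val '' (φ '' E))) :
    G₁.lineGraph ≃g G₂.lineGraph where
  toEquiv := φ
  map_rel_iff' {e f} := by
    simp only [lineGraph_adj_iff_exists, ne_eq, EmbeddingLike.apply_eq_iff_eq]
    refine and_congr_right fun hef ↦ ?_
    have hef' : (e : Sym2 V) ≠ f := fun h ↦ hef (Subtype.ext h)
    have hφef : (φ e : Sym2 W) ≠ φ f := fun h ↦ hef (φ.injective (Subtype.ext h))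
    rw [← isPathEdgeSet_pair_iff e.2 f.2 hef', ← isPathEdgeSet_pair_iff (φ e).2 (φ f).2 hφef]
    simpa only [Set.image_pair] using (hφ {e, f}).symm

lemma Preconnected.exists_adj_mem_notMem (hG : G.Preconnected) {s : Set V} {u x : V}
    (hu : u ∈ s) (hx : x ∉ s) : ∃ a b, G.Adj a b ∧ a ∈ s ∧ b ∉ s :=
  let ⟨d, _, hd⟩ := (hG u x).some.exists_boundary_dart s hu hx
  ⟨d.fst, d.snd, d.adj, hd⟩

lemma Preconnected.forall_mem_edge_of_subsingleton (hG : G.Preconnected)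
    [Subsingleton G.edgeSet] (e : G.edgeSet) (x : V) : x ∈ (e : Sym2 V) := by
  by_contra hx
  obtain ⟨a, b, hab, -, hb⟩ := hG.exists_adj_mem_notMem (Sym2.out_fst_mem (e : Sym2 V)) hx
  have : s(a, b) = e := congrArg Subtype.val (Subsingleton.elim (⟨s(a, b), hab⟩ : G.edgeSet) e)
  exact hb (this ▸ Sym2.mem_mk_right a b)

lemma Preconnected.exists_mem_edge (hG : G.Preconnected) [Nonempty G.edgeSet] (v : V) :
    ∃ e : G.edgeSet, v ∈ (e : Sym2 V) := by
  obtain ⟨e⟩ := ‹Nonempty G.edgeSet›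
  by_cases hv : v ∈ (e : Sym2 V)
  · exact ⟨e, hv⟩
  obtain ⟨a, b, hab, rfl, -⟩ := hG.exists_adj_mem_notMem (s := {v}) rfl
    (x := (e : Sym2 V).out.1) fun h ↦ hv (h ▸ Sym2.out_fst_mem _)
  exact ⟨⟨s(a, b), hab⟩, Sym2.mem_mk_left a b⟩

lemma Preconnected.exists_lineGraph_adj (hG : G.Preconnected) [Nontrivial G.edgeSet]
    (e : G.edgeSet) : ∃ f, G.lineGraph.Adj e f := by
  obtain ⟨f, hfe⟩ := exists_ne e
  obtain ⟨x, hxf, hxe⟩ : ∃ x ∈ (f : Sym2 V), x ∉ (e : Sym2 V) := by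
    by_contra! h
    have hp := Sym2.out_fst_mem (f : Sym2 V)
    exact hfe (Subtype.ext (Sym2.eq_of_ne_mem (G.edge_other_ne f.2 hp).symm hp
      (Sym2.other_mem hp) (h _ hp) (h _ (Sym2.other_mem hp))))
  obtain ⟨a, b, hab, ha, hb⟩ := hG.exists_adj_mem_notMem (s := {y | y ∈ (e : Sym2 V)})
    (Sym2.out_fst_mem (e : Sym2 V)) hxe
  refine ⟨⟨s(a, b), hab⟩, lineGraph_adj_iff_exists.2 ⟨?_, a, ha, Sym2.mem_mk_left a b⟩⟩
  rintro rfl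
  exact hb (Sym2.mem_mk_right a b)

lemma Preconnected.eq_of_forall_mem_edge_iff (hG : G.Preconnected) [Nontrivial G.edgeSet]
    {u v : V} (h : ∀ e : G.edgeSet, u ∈ (e : Sym2 V) ↔ v ∈ (e : Sym2 V)) : u = v := by
  by_contra huv
  obtain ⟨e, hue⟩ := hG.exists_mem_edge u
  obtain ⟨f, hef⟩ := hG.exists_lineGraph_adj e
  obtain ⟨hef, z, hze, hzf⟩ := lineGraph_adj_iff_exists.1 hef
  rw [(Sym2.mem_and_mem_iff huv).1 ⟨hue, (h e).1 hue⟩, Sym2.mem_iff] at hze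
  have huf : u ∈ (f : Sym2 V) := by
    rcases hze with rfl | rfl
    exacts [hzf, (h f).2 hzf]
  exact hef (Subtype.ext (Sym2.eq_of_ne_mem huv hue ((h e).1 hue) huf ((h f).1 huf)))

lemma IsAcyclic.cliqueFree_three (hG : G.IsAcyclic) : G.CliqueFree 3 := fun s hs ↦
  let ⟨_, _, hw, _⟩ := is3Clique_iff_exists_cycle_length_three.1 ⟨s, hs⟩
  hG _ hw

lemma CliqueFree.mem_of_meets_both (hG : G.CliqueFree 3) {e f g : Sym2 V}
    (he : e ∈ G.edgeSet) (hf : f ∈ G.edgeSet) (hg : g ∈ G.edgeSet) (hef : e ≠ f) {d : V}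
    (hde : d ∈ e) (hdf : d ∈ f) {x y : V} (hxe : x ∈ e) (hxg : x ∈ g) (hyf : y ∈ f)
    (hyg : y ∈ g) : d ∈ g := by
  classical
  by_contra hdg
  have hdx : d ≠ x := by rintro rfl; exact hdg hxg
  have hdy : d ≠ y := by rintro rfl; exact hdg hyg
  have hxy : x ≠ y := by rintro rfl; exact hef (Sym2.eq_of_ne_mem hdx hde hxe hdf hyf)
  exact hG {d, x, y} (is3Clique_triple_iff.2
    ⟨G.adj_of_mem_incidenceSet hdx ⟨he, hde⟩ ⟨he, hxe⟩,
      G.adj_of_mem_incidenceSet hdy ⟨hf, hdf⟩ ⟨hf, hyf⟩,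
      G.adj_of_mem_incidenceSet hxy ⟨hg, hxg⟩ ⟨hg, hyg⟩⟩)

def MapsStar (Φ : G₁.edgeSet → G₂.edgeSet) (v : V) (w : W) : Prop :=
  ∀ e : G₁.edgeSet, v ∈ (e : Sym2 V) ↔ w ∈ (Φ e : Sym2 W)

section LineGraphIso

variable (Φ : G₁.lineGraph ≃g G₂.lineGraph)

lemma mem_lineGraphIso_apply (h₂ : G₂.CliqueFree 3) {e f g : G₁.edgeSet} (hef : e ≠ f)
    {v : V} (hve : v ∈ (e : Sym2 V)) (hvf : v ∈ (f : Sym2 V)) {d : W}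
    (hde : d ∈ (Φ e : Sym2 W)) (hdf : d ∈ (Φ f : Sym2 W)) (hvg : v ∈ (g : Sym2 V)) :
    d ∈ (Φ g : Sym2 W) := by
  by_cases hge : g = e
  · rwa [hge]
  by_cases hgf : g = f
  · rwa [hgf]
  have meets {h : G₁.edgeSet} (hhg : h ≠ g) (hvh : v ∈ (h : Sym2 V)) :
      ∃ x, x ∈ (Φ h : Sym2 W) ∧ x ∈ (Φ g : Sym2 W) :=
    (lineGraph_adj_iff_exists.1 (Φ.map_adj_iff.2 (lineGraph_adj_iff_exists.2
      ⟨hhg, v, hvh, hvg⟩))).2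
  obtain ⟨x, hxe, hxg⟩ := meets (Ne.symm hge) hve
  obtain ⟨y, hyf, hyg⟩ := meets (Ne.symm hgf) hvf
  exact h₂.mem_of_meets_both (Φ e).2 (Φ f).2 (Φ g).2
    (fun h ↦ hef (Φ.injective (Subtype.ext h))) hde hdf hxe hxg hyf hyg

lemma mapsStar_of_mem (h₁ : G₁.CliqueFree 3) (h₂ : G₂.CliqueFree 3) {e f : G₁.edgeSet}
    (hef : e ≠ f) {v : V} (hve : v ∈ (e : Sym2 V)) (hvf : v ∈ (f : Sym2 V)) {d : W}
    (hde : d ∈ (Φ e : Sym2 W)) (hdf : d ∈ (Φ f : Sym2 W)) : MapsStar Φ v d := fun g ↦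
  ⟨mem_lineGraphIso_apply Φ h₂ hef hve hvf hde hdf, fun hdg ↦ by
    simpa using mem_lineGraphIso_apply Φ.symm h₁ (Φ.injective.ne hef) hde hdf
      (by simpa using hve) (by simpa using hvf) hdg⟩

lemma mapsStar_of_leaf {e : G₁.edgeSet} {u v : V} (he : (e : Sym2 V) = s(v, u))
    (hv : ∀ g : G₁.edgeSet, v ∈ (g : Sym2 V) → g = e) {c d : W} (hu : MapsStar Φ u d)
    (hΦe : (Φ e : Sym2 W) = s(d, c)) : MapsStar Φ v c := by
  have hdc : d ≠ c := G₂.ne_of_adj (show s(d, c) ∈ G₂.edgeSet from hΦe ▸ (Φ e).2)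
  have hce : c ∈ (Φ e : Sym2 W) := hΦe ▸ Sym2.mem_mk_right d c
  refine fun g ↦ ⟨fun hvg ↦ hv g hvg ▸ hce, fun hcg ↦ ?_⟩
  by_contra hvg
  have hge : g ≠ e := by rintro rfl; exact hvg (he ▸ Sym2.mem_mk_left v u)
  obtain ⟨-, z, hzg, hze⟩ := lineGraph_adj_iff_exists.1 (Φ.map_adj_iff.1
    (lineGraph_adj_iff_exists.2 ⟨Φ.injective.ne hge, c, hcg, hce⟩))
  rw [he, Sym2.mem_iff] at hze
  obtain rfl | rfl := hze
  · exact hvg hzg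
  · exact hge (Φ.injective (Subtype.ext (Sym2.eq_of_ne_mem hdc ((hu g).1 hzg) hcg
      (hΦe ▸ Sym2.mem_mk_left d c) hce)))

lemma exists_mapsStar (hG₁ : G₁.Preconnected) [Nontrivial G₁.edgeSet] (h₁ : G₁.CliqueFree 3)
    (h₂ : G₂.CliqueFree 3) (v : V) : ∃ w, MapsStar Φ v w := by
  have common {e f : G₁.edgeSet} (hef : G₁.lineGraph.Adj e f) :
      ∃ d, d ∈ (Φ e : Sym2 W) ∧ d ∈ (Φ f : Sym2 W) :=
    (lineGraph_adj_iff_exists.1 (Φ.map_adj_iff.2 hef)).2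
  obtain ⟨e, hve⟩ := hG₁.exists_mem_edge v
  by_cases hleaf : ∀ g : G₁.edgeSet, v ∈ (g : Sym2 V) → g = e
  · obtain ⟨f, hef⟩ := hG₁.exists_lineGraph_adj e
    obtain ⟨d, hde, hdf⟩ := common hef
    obtain ⟨hef, z, hze, hzf⟩ := lineGraph_adj_iff_exists.1 hef
    have he : (e : Sym2 V) = s(v, Sym2.Mem.other hve) := (Sym2.other_spec hve).symm
    rw [he, Sym2.mem_iff] at hze
    obtain rfl | rfl := hze
    · exact absurd (hleaf f hzf) hef.symm
    have hu := mapsStar_of_mem Φ h₁ h₂ hef (Sym2.other_mem hve) hzf hde hdf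
    exact ⟨_, mapsStar_of_leaf Φ he hleaf hu (Sym2.other_spec hde).symm⟩
  · push Not at hleaf
    obtain ⟨f, hvf, hfe⟩ := hleaf
    obtain ⟨d, hde, hdf⟩ := common (lineGraph_adj_iff_exists.2 ⟨hfe.symm, v, hve, hvf⟩)
    exact ⟨d, mapsStar_of_mem Φ h₁ h₂ hfe.symm hve hvf hde hdf⟩

end LineGraphIso

lemma nonempty_iso_of_mapsStar (σ : V ≃ W) (φ : G₁.edgeSet ≃ G₂.edgeSet)
    (h : ∀ v, MapsStar φ v (σ v)) : Nonempty (G₁ ≃g G₂) := by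
  have hφ (e : G₁.edgeSet) : (φ e : Sym2 W) = σ.toEmbedding.sym2Map e := Sym2.ext fun x ↦ by
    simpa [Sym2.mem_map, ← Equiv.eq_symm_apply] using (h (σ.symm x) e).symm
  have hG₂ : G₂ = G₁.map σ.toEmbedding := by
    rw [← edgeSet_inj, edgeSet_map]
    ext z
    refine ⟨fun hz ↦ ⟨_, (φ.symm ⟨z, hz⟩).2, by rw [← hφ, φ.apply_symm_apply]⟩, ?_⟩
    rintro ⟨e, he, rfl⟩
    exact hφ ⟨e, he⟩ ▸ (φ ⟨e, he⟩).2
  exact hG₂ ▸ ⟨Iso.map σ G₁⟩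

theorem nonempty_iso_of_lineGraph_iso (hG₁ : G₁.Preconnected) (hG₂ : G₂.Preconnected)
    (h₁ : G₁.CliqueFree 3) (h₂ : G₂.CliqueFree 3) [Nontrivial G₁.edgeSet]
    (Φ : G₁.lineGraph ≃g G₂.lineGraph) : Nonempty (G₁ ≃g G₂) := by
  have : Nontrivial G₂.edgeSet := Φ.symm.toEquiv.nontrivial
  choose ψ hψ using exists_mapsStar Φ hG₁ h₁ h₂
  choose ψ' hψ' using exists_mapsStar Φ.symm hG₂ h₂ h₁
  refine nonempty_iso_of_mapsStar ⟨ψ, ψ', fun v ↦ ?_, fun w ↦ ?_⟩ Φ.toEquiv hψ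
  · refine hG₁.eq_of_forall_mem_edge_iff fun e ↦ ?_
    simpa using ((hψ v e).trans (hψ' (ψ v) (Φ e))).symm
  · refine hG₂.eq_of_forall_mem_edge_iff fun f ↦ ?_
    simpa using ((hψ' w f).trans (hψ (ψ' w) (Φ.symm f))).symm

lemma IsTree.card_eq_of_edgeSet_equiv [Fintype V] [Fintype W] (h₁ : G₁.IsTree) (h₂ : G₂.IsTree)
    (φ : G₁.edgeSet ≃ G₂.edgeSet) : Fintype.card V = Fintype.card W := by
  classical
  rw [← h₁.card_edgeFinset, ← h₂.card_edgeFinset, edgeFinset_card, edgeFinset_card,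
    Fintype.card_congr φ]

lemma IsTree.nonempty_iso_of_subsingleton_edgeSet [Fintype V] [Fintype W] (h₁ : G₁.IsTree)
    (h₂ : G₂.IsTree) (φ : G₁.edgeSet ≃ G₂.edgeSet) [Subsingleton G₁.edgeSet] :
    Nonempty (G₁ ≃g G₂) := by
  have : Subsingleton G₂.edgeSet := φ.symm.subsingleton
  refine nonempty_iso_of_mapsStar (Fintype.equivOfCardEq (h₁.card_eq_of_edgeSet_equiv h₂ φ)) φ
    fun v e ↦ iff_of_true ?_ ?_
  exacts [h₁.connected.preconnected.forall_mem_edge_of_subsingleton e v,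
    h₂.connected.preconnected.forall_mem_edge_of_subsingleton _ _]

end SimpleGraph

/-- If two finite trees admit a bijection between their edge sets sending edge sets of paths
to edge sets of paths (in both directions), then the trees are isomorphic. -/
theorem stmt_16 {V₁ V₂ : Type*} [Fintype V₁] [Fintype V₂]
    (G₁ : SimpleGraph V₁) (G₂ : SimpleGraph V₂)
    (h1 : G₁.IsTree) (h2 : G₂.IsTree)
    (φ : G₁.edgeSet ≃ G₂.edgeSet)
    (hφ : ∀ E : Set G₁.edgeSet,
      IsPathEdgeSet G₁ (Subtype.val '' E) ↔ IsPathEdgeSet G₂ (Subtype.val '' (φ '' E))) :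
    Nonempty (G₁ ≃g G₂) := by
  rcases subsingleton_or_nontrivial G₁.edgeSet with _ | _
  · exact h1.nonempty_iso_of_subsingleton_edgeSet h2 φ
  · exact SimpleGraph.nonempty_iso_of_lineGraph_iso h1.connected.preconnected
      h2.connected.preconnected h1.isAcyclic.cliqueFree_three h2.isAcyclic.cliqueFree_three
      (SimpleGraph.lineGraphIsoOfIsPathEdgeSet φ hφ)
end
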